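/- For every constant α > 0 there exists a constant β > 0 such that the following holds for any edge probability q with 0 ≤ q ≤ 2/d. Whp there is no vertex set W ⊆ V(Q^d) with |W| ≥ α·n such that W spans at most β·d·|W| edges in Q^d and W spans at least |W|/2 edges in the random subgraph Q^d_q. -/

import Mathlib

open MeasureTheory Filter

noncomputable section

/-- The `d`-dimensional hypercube graph `Q^d`, on vertex set `{0,1}^d`. -/
def cubeGraph (d : ℕ) : SimpleGraph (Fin d → Bool) where
  Adj x y := hammingDist x y = 1
  symm := ⟨fun x y h => by show hammingDist y x = 1; rw [hammingDist_comm]; exact h⟩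
  loopless := ⟨fun x h => by simp [hammingDist_self] at h⟩

/-- The spanning subgraph of `G` consisting of those edges `e` with `ω e = true`. -/
def percolate {V : Type*} (G : SimpleGraph V) (ω : Sym2 V → Bool) : SimpleGraph V where
  Adj x y := G.Adj x y ∧ ω s(x, y) = true
  symm := ⟨by
    rintro x y ⟨h1, h2⟩
    exact ⟨h1.symm, by rwa [Sym2.eq_swap]⟩⟩
  loopless := ⟨fun x h => G.loopless.irrefl x h.1⟩

/-- The Bernoulli measure on `Bool` with success probability `p` (truncated to `[0,1]`). -/
def bernoulliBool (p : ℝ) : Measure Bool :=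
  (PMF.bernoulli (min (Real.toNNReal p) 1) (min_le_right _ _)).toMeasure

instance (p : ℝ) : IsProbabilityMeasure (bernoulliBool p) := by
  unfold bernoulliBool; infer_instance

/-- The probability measure on edge-configurations of the `d`-dimensional hypercube in which
each potential edge is retained independently with probability `p`; the configuration space
is `Sym2 (Fin d → Bool) → Bool`, and `Q^d_p` is `percolate (cubeGraph d) ω`. -/
def cubeMeasure (d : ℕ) (p : ℝ) : Measure (Sym2 (Fin d → Bool) → Bool) :=
  Measure.pi fun _ => bernoulliBool p

/-- `C` is a largest connected component of `H`. -/
def IsLargestComponent {V : Type*} [Fintype V] (H : SimpleGraph V)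
    (C : H.ConnectedComponent) : Prop :=
  ∀ C' : H.ConnectedComponent, C'.supp.ncard ≤ C.supp.ncard

/-- The edge boundary of the vertex set `S` in the graph `H`: the set of edges of `H` with
exactly one endpoint in `S`. -/
def edgeBoundary {V : Type*} (H : SimpleGraph V) (S : Set V) : Set (Sym2 V) :=
  {e | e ∈ H.edgeSet ∧ ∃ x y, e = s(x, y) ∧ x ∈ S ∧ y ∉ S}

/-- The vertex boundary of the vertex set `S` in the graph `H`: the set of vertices outside
`S` having a neighbour in `S`. -/
def vertexBoundary {V : Type*} (H : SimpleGraph V) (S : Set V) : Set V :=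
  {v | v ∉ S ∧ ∃ u ∈ S, H.Adj u v}

/-- The survival probability of a Galton–Watson branching process with Poisson(`c`) offspring
distribution: one minus the extinction probability, the extinction probability being the least
fixed point in `[0,1]` of the probability generating function `s ↦ exp (c * (s - 1))` of the
Poisson(`c`) distribution. -/
def poissonSurvival (c : ℝ) : ℝ :=
  1 - sInf {s : ℝ | s ∈ Set.Icc (0 : ℝ) 1 ∧ Real.exp (c * (s - 1)) = s}

/-- `H` contains a complete minor of order `t`: there are `t` pairwise disjoint connected
branch sets with an edge of `H` between any two of them. -/
def HasCompleteMinor {V : Type*} (H : SimpleGraph V) (t : ℕ) : Prop :=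
  ∃ B : Fin t → Set V,
    (∀ i, (H.induce (B i)).Connected) ∧
    (Pairwise fun i j => Disjoint (B i) (B j)) ∧
    (∀ i j, i ≠ j → ∃ x ∈ B i, ∃ y ∈ B j, H.Adj x y)

/-! A union bound over all `2^n` vertex sets. If `W` spans `m ≤ β d |W|` edges of the cube,
at least `k = ⌈|W|/2⌉` of them survive with probability at most
`C(m,k) q^k ≤ (e m q / k)^k ≤ (4 e β)^k`. As `k ≥ α n / 2`, taking `4 e β ≤ 4^(-⌈2/α⌉)` makes
this at most `4^(-n)`, so the probability that some such `W` exists is at most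
`2^n 4^(-n) = 2^(-n)`. -/

open scoped ENNReal
open Finset Real

section Bernoulli

variable {ι : Type*} [Fintype ι]

lemma bernoulliBool_singleton_true_le (p : ℝ) : bernoulliBool p {true} ≤ ENNReal.ofReal p := by
  rw [bernoulliBool, PMF.toMeasure_apply_singleton _ _ (measurableSet_singleton _),
    PMF.bernoulli_apply, cond_true]
  exact ENNReal.coe_le_coe.2 (min_le_left _ _)

lemma pi_bernoulliBool_forall_true_le (p : ℝ) (T : Finset ι) :
    Measure.pi (fun _ : ι => bernoulliBool p) {ω | ∀ i ∈ T, ω i = true}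
      ≤ ENNReal.ofReal p ^ #T := by
  classical
  have hpi : {ω : ι → Bool | ∀ i ∈ T, ω i = true}
      = Set.univ.pi fun i => if i ∈ T then {true} else Set.univ := by
    ext ω
    simp only [Set.mem_ofPred_eq, Set.mem_pi, Set.mem_univ, true_implies]
    refine forall_congr' fun i => ?_
    split_ifs <;> simp [*]
  calc Measure.pi (fun _ : ι => bernoulliBool p) {ω | ∀ i ∈ T, ω i = true}
      = ∏ i ∈ T, bernoulliBool p {true} := by
        simp only [hpi, Measure.pi_pi, apply_ite, measure_univ, Fintype.prod_ite_mem]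
    _ ≤ ENNReal.ofReal p ^ #T := by
        rw [prod_const]
        exact pow_le_pow_left₀ zero_le (bernoulliBool_singleton_true_le p) _

lemma pi_bernoulliBool_le_card_filter_le (p : ℝ) (F : Finset ι) (k : ℕ) :
    Measure.pi (fun _ : ι => bernoulliBool p) {ω | k ≤ #{i ∈ F | ω i = true}}
      ≤ (#F).choose k * ENNReal.ofReal p ^ k := by
  calc Measure.pi (fun _ : ι => bernoulliBool p) {ω | k ≤ #{i ∈ F | ω i = true}}
      ≤ Measure.pi (fun _ : ι => bernoulliBool p)
          (⋃ T ∈ F.powersetCard k, {ω | ∀ i ∈ T, ω i = true}) := by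
        refine measure_mono fun ω hω => ?_
        obtain ⟨T, hT, hTk⟩ := exists_subset_card_eq hω
        exact Set.mem_iUnion₂.2 ⟨T, mem_powersetCard.2 ⟨hT.trans (filter_subset _ _), hTk⟩,
          fun i hi => (mem_filter.1 (hT hi)).2⟩
    _ ≤ ∑ T ∈ F.powersetCard k, Measure.pi (fun _ : ι => bernoulliBool p)
          {ω | ∀ i ∈ T, ω i = true} := measure_biUnion_finset_le _ _
    _ ≤ ∑ _T ∈ F.powersetCard k, ENNReal.ofReal p ^ k := by
        refine sum_le_sum fun T hT => ?_
        rw [← (mem_powersetCard.1 hT).2]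
        exact pi_bernoulliBool_forall_true_le p T
    _ = (#F).choose k * ENNReal.ofReal p ^ k := by
        rw [sum_const, card_powersetCard, nsmul_eq_mul]

end Bernoulli

/-- The estimate `C(m, k) q^k ≤ (e m q / k)^k`, in a form free of division. -/
lemma Nat.choose_mul_pow_le_of_mul_le {m k : ℕ} {q c : ℝ} (hq : 0 ≤ q) (hc : 0 ≤ c)
    (h : m * q ≤ c * k) : (m.choose k : ℝ) * q ^ k ≤ (c * exp 1) ^ k :=
  calc (m.choose k : ℝ) * q ^ k ≤ (m : ℝ) ^ k / k.factorial * q ^ k := by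
        gcongr
        exact Nat.choose_le_pow_div k m
    _ = (m * q) ^ k / k.factorial := by rw [mul_pow]; ring
    _ ≤ (c * k) ^ k / k.factorial := by gcongr
    _ = c ^ k * ((k : ℝ) ^ k / k.factorial) := by rw [mul_pow]; ring
    _ ≤ c ^ k * exp k := by gcongr; exact Real.pow_div_factorial_le_exp _ (Nat.cast_nonneg _) k
    _ = (c * exp 1) ^ k := by rw [mul_pow, ← exp_nat_mul, mul_one]

section Percolation

variable {V : Type*}

def spannedEdges (G : SimpleGraph V) (W : Set V) : Set (Sym2 V) :=
  {e ∈ G.edgeSet | ∀ v ∈ e, v ∈ W}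

lemma spannedEdges_percolate (G : SimpleGraph V) (ω : Sym2 V → Bool) (W : Set V) :
    spannedEdges (percolate G ω) W = {e ∈ spannedEdges G W | ω e = true} := by
  ext e
  induction e using Sym2.ind with
  | _ x y =>
    simp only [spannedEdges, Set.mem_ofPred_eq, SimpleGraph.mem_edgeSet]
    exact ⟨fun ⟨⟨hG, hω⟩, hW⟩ => ⟨⟨hG, hW⟩, hω⟩, fun ⟨⟨hG, hW⟩, hω⟩ => ⟨⟨hG, hω⟩, hW⟩⟩

variable [Fintype V] (G : SimpleGraph V) {p : ℝ}

lemma pi_bernoulliBool_le_ncard_spannedEdges_percolate_le {c : ℝ} (hp : 0 ≤ p) (hc : 0 ≤ c)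
    {W : Set V} {k : ℕ} (h : (spannedEdges G W).ncard * p ≤ c * k) :
    Measure.pi (fun _ : Sym2 V => bernoulliBool p)
        {ω | k ≤ (spannedEdges (percolate G ω) W).ncard}
      ≤ ENNReal.ofReal (c * exp 1) ^ k := by
  classical
  set F := (spannedEdges G W).toFinset
  have hF : ∀ ω, (spannedEdges (percolate G ω) W).ncard = #{e ∈ F | ω e = true} := by
    intro ω
    rw [spannedEdges_percolate, Set.ncard_eq_toFinset_card']
    congr 1
    ext e
    simp [F]
  simp_rw [hF]
  calc Measure.pi (fun _ : Sym2 V => bernoulliBool p) {ω | k ≤ #{e ∈ F | ω e = true}}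
      ≤ (#F).choose k * ENNReal.ofReal p ^ k := pi_bernoulliBool_le_card_filter_le p F k
    _ = ENNReal.ofReal ((#F).choose k * p ^ k) := by
        rw [ENNReal.ofReal_mul (by positivity), ENNReal.ofReal_pow hp, ENNReal.ofReal_natCast]
    _ ≤ ENNReal.ofReal ((c * exp 1) ^ k) := by
        refine ENNReal.ofReal_le_ofReal (Nat.choose_mul_pow_le_of_mul_le hp hc ?_)
        rwa [Set.ncard_eq_toFinset_card'] at h
    _ = ENNReal.ofReal (c * exp 1) ^ k := ENNReal.ofReal_pow (by positivity) k

def sparseDenseEvent (G : SimpleGraph V) (α β D : ℝ) : Set (Sym2 V → Bool) :=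
  {ω | ∃ W : Set V, α * Fintype.card V ≤ W.ncard ∧
    ((spannedEdges G W).ncard : ℝ) ≤ β * D * W.ncard ∧
    (W.ncard : ℝ) / 2 ≤ (spannedEdges (percolate G ω) W).ncard}

variable {α β D : ℝ} {M : ℕ}

lemma pi_bernoulliBool_dense_of_sparse_le (hM : 2 ≤ M * α) (hβ : 0 ≤ β)
    (hβM : 4 * β * exp 1 ≤ 4⁻¹ ^ M) (hp : 0 ≤ p) (hpD : p * D ≤ 2) {W : Set V}
    (hW : α * Fintype.card V ≤ W.ncard)
    (hsparse : ((spannedEdges G W).ncard : ℝ) ≤ β * D * W.ncard) :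
    Measure.pi (fun _ : Sym2 V => bernoulliBool p)
        {ω | (W.ncard : ℝ) / 2 ≤ (spannedEdges (percolate G ω) W).ncard}
      ≤ 4⁻¹ ^ Fintype.card V := by
  set k := ⌈(W.ncard : ℝ) / 2⌉₊
  have hk : (W.ncard : ℝ) / 2 ≤ k := Nat.le_ceil _
  have hedges : (spannedEdges G W).ncard * p ≤ 4 * β * k :=
    calc (spannedEdges G W).ncard * p ≤ β * D * W.ncard * p := by gcongr
      _ = β * W.ncard * (p * D) := by ring
      _ ≤ β * W.ncard * 2 := by gcongr
      _ = 4 * β * (W.ncard / 2) := by ring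
      _ ≤ 4 * β * k := by gcongr
  have hcard : Fintype.card V ≤ M * k := by
    have hM' := mul_le_mul_of_nonneg_right hM (Nat.cast_nonneg (Fintype.card V))
    have hW' := mul_le_mul_of_nonneg_left hW (Nat.cast_nonneg M)
    have hk' := mul_le_mul_of_nonneg_left hk (Nat.cast_nonneg M)
    exact_mod_cast (by linarith : (Fintype.card V : ℝ) ≤ M * k)
  calc Measure.pi (fun _ : Sym2 V => bernoulliBool p)
        {ω | (W.ncard : ℝ) / 2 ≤ (spannedEdges (percolate G ω) W).ncard}
      ≤ Measure.pi (fun _ : Sym2 V => bernoulliBool p)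
          {ω | k ≤ (spannedEdges (percolate G ω) W).ncard} :=
        measure_mono fun ω hω => Nat.ceil_le.2 hω
    _ ≤ ENNReal.ofReal (4 * β * exp 1) ^ k :=
        pi_bernoulliBool_le_ncard_spannedEdges_percolate_le G hp (by positivity) hedges
    _ ≤ ENNReal.ofReal (4⁻¹ ^ M) ^ k := by gcongr
    _ = 4⁻¹ ^ (M * k) := by
        rw [ENNReal.ofReal_pow (by norm_num), ENNReal.ofReal_inv_of_pos (by norm_num), pow_mul]
        norm_num
    _ ≤ 4⁻¹ ^ Fintype.card V := pow_le_pow_of_le_one zero_le (by norm_num) hcard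

lemma pi_bernoulliBool_sparseDenseEvent_le (hM : 2 ≤ M * α) (hβ : 0 ≤ β)
    (hβM : 4 * β * exp 1 ≤ 4⁻¹ ^ M) (hp : 0 ≤ p) (hpD : p * D ≤ 2) :
    Measure.pi (fun _ : Sym2 V => bernoulliBool p) (sparseDenseEvent G α β D)
      ≤ 2⁻¹ ^ Fintype.card V := by
  classical
  set S : Finset (Set V) :=
    {W | α * Fintype.card V ≤ W.ncard ∧ ((spannedEdges G W).ncard : ℝ) ≤ β * D * W.ncard}
  calc Measure.pi (fun _ : Sym2 V => bernoulliBool p) (sparseDenseEvent G α β D)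
      ≤ Measure.pi (fun _ : Sym2 V => bernoulliBool p)
          (⋃ W ∈ S, {ω | (W.ncard : ℝ) / 2 ≤ (spannedEdges (percolate G ω) W).ncard}) :=
        measure_mono fun ω ⟨W, hW, hsparse, hdense⟩ =>
          Set.mem_iUnion₂.2 ⟨W, mem_filter.2 ⟨mem_univ _, hW, hsparse⟩, hdense⟩
    _ ≤ ∑ W ∈ S, Measure.pi (fun _ : Sym2 V => bernoulliBool p)
          {ω | (W.ncard : ℝ) / 2 ≤ (spannedEdges (percolate G ω) W).ncard} :=
        measure_biUnion_finset_le _ _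
    _ ≤ #S • 4⁻¹ ^ Fintype.card V := sum_le_card_nsmul _ _ _ fun W hW =>
        have ⟨hW, hsparse⟩ := (mem_filter.1 hW).2
        pi_bernoulliBool_dense_of_sparse_le G hM hβ hβM hp hpD hW hsparse
    _ ≤ 2 ^ Fintype.card V * 4⁻¹ ^ Fintype.card V := by
        rw [nsmul_eq_mul]
        gcongr
        calc (#S : ℝ≥0∞) ≤ Fintype.card (Set V) := by exact_mod_cast card_le_univ S
          _ = 2 ^ Fintype.card V := by rw [Fintype.card_set]; push_cast; rfl
    _ = 2⁻¹ ^ Fintype.card V := by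
        rw [← mul_pow, show (4 : ℝ≥0∞) = 2 * 2 by norm_num,
          ENNReal.mul_inv (by simp) (by simp), ← mul_assoc,
          ENNReal.mul_inv_cancel (by simp) (by simp), one_mul]

end Percolation

instance (d : ℕ) (p : ℝ) : IsProbabilityMeasure (cubeMeasure d p) := by
  unfold cubeMeasure; infer_instance

/-- for every `α > 0` there is `β > 0` such that, for any edge probabilities
`0 ≤ q_d ≤ 2/d`, whp there is no vertex set `W` of at least `α n` vertices spanning at most
`β d |W|` edges of `Q^d` and at least `|W|/2` edges of `Q^d_{q_d}`. -/
theorem no_sparse_dense_set (α : ℝ) (hα : 0 < α) :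
    ∃ β : ℝ, 0 < β ∧ ∀ q : ℕ → ℝ, (∀ d, 0 ≤ q d) → (∀ d : ℕ, q d ≤ 2 / d) →
      Tendsto (fun d : ℕ =>
          cubeMeasure d (q d)
            {ω | ¬ ∃ W : Set (Fin d → Bool),
              α * 2 ^ d ≤ (W.ncard : ℝ) ∧
              (({e ∈ (cubeGraph d).edgeSet | ∀ v ∈ e, v ∈ W}).ncard : ℝ) ≤
                β * d * (W.ncard : ℝ) ∧
              (W.ncard : ℝ) / 2 ≤
                (({e ∈ (percolate (cubeGraph d) ω).edgeSet | ∀ v ∈ e, v ∈ W}).ncard : ℝ)})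
        atTop (nhds 1) := by
  set M := ⌈2 / α⌉₊
  have hM : 2 ≤ M * α := (div_le_iff₀ hα).1 (Nat.le_ceil _)
  set β : ℝ := 4⁻¹ ^ M / (4 * exp 1) with hβ
  refine ⟨β, by positivity, fun q hq0 hq2 => ?_⟩
  have hβM : 4 * β * exp 1 ≤ 4⁻¹ ^ M := le_of_eq (by rw [hβ]; field_simp)
  have hqd : ∀ d : ℕ, q d * d ≤ 2 := fun d => by
    rcases (Nat.cast_nonneg d : (0 : ℝ) ≤ d).eq_or_lt with hd | hd
    · rw [← hd, mul_zero]; norm_num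
    · exact (le_div_iff₀ hd).1 (hq2 d)
  have hbad : ∀ d, cubeMeasure d (q d) (sparseDenseEvent (cubeGraph d) α β d) ≤ 2⁻¹ ^ 2 ^ d :=
    fun d => by
      have hcard : Fintype.card (Fin d → Bool) = 2 ^ d := by simp
      have := pi_bernoulliBool_sparseDenseEvent_le (cubeGraph d) hM (by positivity) hβM
        (hq0 d) (hqd d)
      rwa [hcard] at this
  have hbad_lim : Tendsto (fun d => cubeMeasure d (q d) (sparseDenseEvent (cubeGraph d) α β d))
      atTop (nhds 0) :=
    tendsto_of_tendsto_of_tendsto_of_le_of_le tendsto_const_nhds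
      ((ENNReal.tendsto_pow_atTop_nhds_zero_of_lt_one (by norm_num)).comp
        (tendsto_pow_atTop_atTop_of_one_lt one_lt_two)) (fun _ => zero_le) hbad
  have hgood_lim := ENNReal.Tendsto.sub tendsto_const_nhds hbad_lim (Or.inl ENNReal.one_ne_top)
  rw [tsub_zero] at hgood_lim
  convert hgood_lim using 2 with d
  rw [← prob_compl_eq_one_sub MeasurableSet.of_discrete]
  congr 1
  ext ω
  simp [sparseDenseEvent, spannedEdges]
end
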